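/- arXiv:2205.09786 — 7 statements merged into one kernel-verified Lean document; each statement's English description precedes it below -/
import Mathlib

section
/- (PPR invariant property) Let V be a nonempty finite node set with nonnegative weights w : V → V → ℝ and positive generalized out-degrees d(u) = Σ_v w(u,v) > 0, let P(u,v) = w(u,v)/d(u) be the random-walk transition matrix, let 0 < α < 1 and s ∈ V, and let p, r : V → ℝ. Then the following two conditions are equivalent: (I) for every u ∈ V, p(u) + α·r(u) = (1−α)·Σ_{x∈V} (w(x,u)/d(x))·p(x) + α·[u = s]; (II) for every u ∈ V, π_s(u) = p(u) + Σ_{x∈V} r(x)·π_x(u), where π_x denotes the personalized PageRank vector with source x. -/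
open Matrix

/-- **PPR invariant property.** Let `V` be a nonempty finite node set with
nonnegative weights `w` and positive generalized out-degrees `d(u) = Σ_v w(u,v) > 0`, let
`P(u,v) = w(u,v)/d(u)` be the random-walk transition matrix, let `0 < α < 1` and `s ∈ V`, and
let `p, r : V → ℝ`. With `π_x` the personalized PageRank vector of source `x` (the unique
solution of `π_x = (1-α)·Pᵀ·π_x + α·1_x`), the following are equivalent:
(I) `∀ u, p(u) + α·r(u) = (1-α)·Σ_x (w(x,u)/d(x))·p(x) + α·[u = s]`;
(II) `∀ u, π_s(u) = p(u) + Σ_x r(x)·π_x(u)`. -/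
theorem ppr_invariant_property
    {V : Type*} [Fintype V] [Nonempty V] [DecidableEq V]
    (w : V → V → ℝ)
    (hw_nonneg : ∀ u v : V, 0 ≤ w u v)
    (hd_pos : ∀ u : V, 0 < ∑ v : V, w u v)
    (α : ℝ) (hα₀ : 0 < α) (hα₁ : α < 1) (s : V)
    (P : Matrix V V ℝ)
    (hP : ∀ u v : V, P u v = w u v / ∑ y : V, w u y)
    (π : V → V → ℝ)
    (hπ : ∀ x : V, π x = (1 - α) • Pᵀ.mulVec (π x) + α • (Pi.single x 1 : V → ℝ))
    (p r : V → ℝ) :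
    (∀ u : V, p u + α * r u =
        (1 - α) * (∑ x : V, (w x u / ∑ y : V, w x y) * p x) +
          α * (if u = s then 1 else 0)) ↔
    (∀ u : V, π s u = p u + ∑ x : V, r x * π x u) := by
  -- pointwise form of the PPV equation
  have hπ' : ∀ y u : V,
      π y u = (1 - α) * (∑ x : V, P x u * π y x) + α * (if u = y then 1 else 0) := by
    intro y u
    have := congrFun (hπ y) u
    simpa [Matrix.mulVec, dotProduct, Matrix.transpose_apply, Pi.single_apply,
      eq_comm] using this
  have hkey : ∀ y u : V,
      (1 - α) * (∑ x : V, P x u * π y x) = π y u - α * (if u = y then 1 else 0) := by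
    intro y u; rw [hπ' y u]; ring
  have hPnn : ∀ x u : V, 0 ≤ P x u := fun x u => by
    rw [hP]; exact div_nonneg (hw_nonneg x u) (hd_pos x).le
  have hProw : ∀ x : V, (∑ u : V, P x u) = 1 := by
    intro x
    have hd := (hd_pos x).ne'
    simp only [hP]
    rw [← Finset.sum_div, div_self hd]
  -- the key "swap" computation, used in both directions
  have swap : ∀ u : V, (1 - α) * ∑ x : V, P x u * ∑ y : V, r y * π y x
      = (∑ y : V, r y * π y u) - α * r u := by
    intro u
    have h1 : (∑ x : V, P x u * ∑ y : V, r y * π y x)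
        = ∑ y : V, r y * ∑ x : V, P x u * π y x := by
      simp only [Finset.mul_sum]
      rw [Finset.sum_comm]
      apply Finset.sum_congr rfl
      intro y _
      apply Finset.sum_congr rfl
      intro x _; ring
    rw [h1, Finset.mul_sum]
    have h2 : ∀ y : V, (1 - α) * (r y * ∑ x : V, P x u * π y x)
        = r y * π y u - r y * (α * (if u = y then 1 else 0)) := by
      intro y
      calc (1 - α) * (r y * ∑ x : V, P x u * π y x)
          = r y * ((1 - α) * ∑ x : V, P x u * π y x) := by ring
        _ = r y * (π y u - α * (if u = y then 1 else 0)) := by rw [hkey y u]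
        _ = r y * π y u - r y * (α * (if u = y then 1 else 0)) := by ring
    rw [Finset.sum_congr rfl (fun y _ => h2 y), Finset.sum_sub_distrib]
    congr 1
    rw [Finset.sum_eq_single u]
    · simp [mul_comm]
    · intro y _ hy
      simp [(Ne.symm hy : u ≠ y)]
    · intro h; exact absurd (Finset.mem_univ u) h
  -- uniqueness lemma
  have huniq : ∀ f : V → ℝ, (∀ u, f u = (1 - α) * ∑ x : V, P x u * f x) → ∀ u, f u = 0 := by
    intro f hf
    have step : ∀ u : V, |f u| ≤ (1 - α) * ∑ x : V, P x u * |f x| := by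
      intro u
      rw [hf u, abs_mul, abs_of_nonneg (by linarith : (0:ℝ) ≤ 1 - α)]
      apply mul_le_mul_of_nonneg_left _ (by linarith : (0:ℝ) ≤ 1 - α)
      refine le_trans (Finset.abs_sum_le_sum_abs _ _) (le_of_eq ?_)
      apply Finset.sum_congr rfl
      intro x _
      rw [abs_mul, abs_of_nonneg (hPnn x u)]
    have hS : (∑ u : V, |f u|) ≤ (1 - α) * ∑ u : V, |f u| := by
      calc (∑ u : V, |f u|) ≤ ∑ u : V, (1 - α) * ∑ x : V, P x u * |f x| :=
            Finset.sum_le_sum fun u _ => step u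
        _ = (1 - α) * ∑ x : V, |f x| := by
            rw [← Finset.mul_sum, Finset.sum_comm]
            congr 1
            apply Finset.sum_congr rfl
            intro x _
            rw [← Finset.sum_mul, hProw x, one_mul]
    have hS0' : (∑ u : V, |f u|) = 0 := by
      have hnn : (0:ℝ) ≤ ∑ u : V, |f u| :=
        Finset.sum_nonneg fun u _ => abs_nonneg (f u)
      nlinarith
    intro u
    have := (Finset.sum_eq_zero_iff_of_nonneg
      (fun u (_ : u ∈ Finset.univ) => abs_nonneg (f u))).mp hS0' u (Finset.mem_univ u)
    exact abs_eq_zero.mp this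
  constructor
  · -- (I) → (II)
    intro hI u
    set f : V → ℝ := fun u => π s u - (p u + ∑ x : V, r x * π x u) with hfdef
    have hfeq : ∀ u, f u = (1 - α) * ∑ x : V, P x u * f x := by
      intro u
      have expand : (∑ x : V, P x u * f x)
          = (∑ x : V, P x u * π s x) - (∑ x : V, P x u * p x)
            - ∑ x : V, P x u * ∑ y : V, r y * π y x := by
        simp only [hfdef]
        rw [← Finset.sum_sub_distrib, ← Finset.sum_sub_distrib]
        apply Finset.sum_congr rfl
        intro x _; ring
      have hp' : (1 - α) * (∑ x : V, P x u * p x)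
          = p u + α * r u - α * (if u = s then 1 else 0) := by
        have := hI u
        have hPe : (∑ x : V, P x u * p x) = ∑ x : V, (w x u / ∑ y : V, w x y) * p x := by
          apply Finset.sum_congr rfl; intro x _; rw [hP]
        rw [hPe]; linarith
      rw [expand, mul_sub, mul_sub, hkey s u, hp', swap u, hfdef]
      ring
    have := huniq f hfeq u
    simp only [hfdef] at this
    linarith
  · -- (II) → (I)
    intro hII u
    have hPe : (∑ x : V, (w x u / ∑ y : V, w x y) * p x) = ∑ x : V, P x u * p x := by
      apply Finset.sum_congr rfl; intro x _; rw [hP]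
    rw [hPe]
    have expand : (∑ x : V, P x u * p x)
        = (∑ x : V, P x u * π s x) - ∑ x : V, P x u * ∑ y : V, r y * π y x := by
      rw [← Finset.sum_sub_distrib]
      apply Finset.sum_congr rfl
      intro x _
      rw [hII x]; ring
    rw [expand, mul_sub, hkey s u, swap u]
    have := hII u
    linarith
end

section
/- (Push preserves the invariant) Let V be a nonempty finite node set with nonnegative weights w : V → V → ℝ and positive generalized out-degrees d(u) = Σ_v w(u,v) > 0, let P(u,v) = w(u,v)/d(u), let 0 < α < 1 and s ∈ V. Let u ∈ V satisfy w(u,u) = 0, and suppose p, r : V → ℝ satisfy the invariant π_s(y) = p(y) + Σ_{x∈V} r(x)·π_x(y) for every y ∈ V. Define the pushed pair p', r' by p'(x) = p(x) for x ≠ u, p'(u) = p(u) + α·r(u); r'(u) = 0, and r'(x) = r(x) + (1−α)·r(u)·w(u,x)/d(u) for x ≠ u. Then π_s(y) = p'(y) + Σ_{x∈V} r'(x)·π_x(y) for every y ∈ V. -/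
open Matrix

/-- Uniqueness of the PageRank fixed point: if `v = (1-α)·Pᵀ v` for a row-stochastic
nonnegative `P` and `0 < α < 1`, then `v = 0`. -/
lemma ppr_fixed_zero {V : Type*} [Fintype V] (α : ℝ) (hα₀ : 0 < α) (hα₁ : α < 1)
    (P : Matrix V V ℝ) (hPnn : ∀ a b : V, 0 ≤ P a b) (hProw : ∀ a : V, ∑ b : V, P a b = 1)
    (v : V → ℝ) (hv : ∀ y : V, v y = (1 - α) * ∑ z : V, P z y * v z) :
    ∀ y : V, v y = 0 := by
  have hS : ∑ y : V, |v y| ≤ (1 - α) * ∑ y : V, |v y| := by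
    calc ∑ y : V, |v y| ≤ ∑ y : V, (1 - α) * ∑ z : V, P z y * |v z| := by
          apply Finset.sum_le_sum
          intro y _
          rw [hv y, abs_mul, abs_of_pos (by linarith : (0:ℝ) < 1 - α)]
          apply mul_le_mul_of_nonneg_left _ (by linarith : (0:ℝ) ≤ 1 - α)
          calc |∑ z : V, P z y * v z| ≤ ∑ z : V, |P z y * v z| :=
                Finset.abs_sum_le_sum_abs _ _
            _ = ∑ z : V, P z y * |v z| := by
                apply Finset.sum_congr rfl
                intro z _
                rw [abs_mul, abs_of_nonneg (hPnn z y)]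
      _ = (1 - α) * ∑ y : V, |v y| := by
          rw [← Finset.mul_sum, Finset.sum_comm]
          congr 1
          apply Finset.sum_congr rfl
          intro z _
          rw [← Finset.sum_mul, hProw z, one_mul]
  have hS0 : (0:ℝ) ≤ ∑ y : V, |v y| := Finset.sum_nonneg fun y _ => abs_nonneg _
  have hSz : ∑ y : V, |v y| = 0 := by nlinarith
  intro y
  have := (Finset.sum_eq_zero_iff_of_nonneg (fun y _ => abs_nonneg (v y))).mp hSz y
    (Finset.mem_univ y)
  exact abs_eq_zero.mp this

/-- **Push preserves the invariant.** Let `V` be a nonempty finite node set with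
nonnegative weights `w` and positive generalized out-degrees `d(u) = Σ_v w(u,v) > 0`, let
`P(u,v) = w(u,v)/d(u)`, let `0 < α < 1` and `s ∈ V`, and let `π_x` be the personalized PageRank
vector of source `x`. Let `u ∈ V` satisfy `w(u,u) = 0`, and suppose `p, r : V → ℝ` satisfy the
invariant `π_s(y) = p(y) + Σ_x r(x)·π_x(y)` for every `y`. Define the pushed pair:
`p'(x) = p(x)` for `x ≠ u`, `p'(u) = p(u) + α·r(u)`; `r'(u) = 0`, and
`r'(x) = r(x) + (1-α)·r(u)·w(u,x)/d(u)` for `x ≠ u`. Then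
`π_s(y) = p'(y) + Σ_x r'(x)·π_x(y)` for every `y`. -/
theorem push_preserves_invariant
    {V : Type*} [Fintype V] [Nonempty V] [DecidableEq V]
    (w : V → V → ℝ)
    (hw_nonneg : ∀ u v : V, 0 ≤ w u v)
    (hd_pos : ∀ u : V, 0 < ∑ v : V, w u v)
    (α : ℝ) (hα₀ : 0 < α) (hα₁ : α < 1) (s : V)
    (P : Matrix V V ℝ)
    (hP : ∀ u v : V, P u v = w u v / ∑ y : V, w u y)
    (π : V → V → ℝ)
    (hπ : ∀ x : V, π x = (1 - α) • Pᵀ.mulVec (π x) + α • (Pi.single x 1 : V → ℝ))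
    (u : V) (hu : w u u = 0)
    (p r : V → ℝ)
    (hinv : ∀ y : V, π s y = p y + ∑ x : V, r x * π x y)
    (p' r' : V → ℝ)
    (hp' : ∀ x : V, p' x = if x = u then p u + α * r u else p x)
    (hr' : ∀ x : V,
      r' x = if x = u then 0 else r x + (1 - α) * r u * w u x / ∑ y : V, w u y) :
    ∀ y : V, π s y = p' y + ∑ x : V, r' x * π x y := by
  -- basic facts about P
  have hPnn : ∀ a b : V, 0 ≤ P a b := fun a b => by
    rw [hP]; exact div_nonneg (hw_nonneg a b) (hd_pos a).le
  have hProw : ∀ a : V, ∑ b : V, P a b = 1 := fun a => by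
    simp only [hP]
    rw [← Finset.sum_div, div_self (hd_pos a).ne']
  have hPuu : P u u = 0 := by rw [hP, hu, zero_div]
  -- pointwise form of the fixed point equation
  have hπ' : ∀ x y : V, π x y =
      (1 - α) * ∑ z : V, P z y * π x z + α * (if y = x then (1:ℝ) else 0) := by
    intro x y
    have := congrFun (hπ x) y
    simpa [Matrix.mulVec, dotProduct, Matrix.transpose_apply, Pi.single_apply,
      mul_comm] using this
  -- the auxiliary vector τ y = Σ_x P u x * π x y
  set τ : V → ℝ := fun y => ∑ x : V, P u x * π x y with hτ
  set σ : V → ℝ := fun y => α * (if y = u then (1:ℝ) else 0) + (1 - α) * τ y with hσdef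
  -- σ satisfies the same fixed-point equation as π u
  have hσ : ∀ y : V, σ y = (1 - α) * ∑ z : V, P z y * σ z
      + α * (if y = u then (1:ℝ) else 0) := by
    intro y
    have hsum1 : ∑ z : V, P z y * (if z = u then (1:ℝ) else 0) = P u y := by
      simp [mul_ite, Finset.sum_ite_eq']
    have hsplit : ∑ z : V, P z y * σ z
        = α * P u y + (1 - α) * ∑ z : V, P z y * τ z := by
      calc ∑ z : V, P z y * σ z
          = ∑ z : V, (α * (P z y * (if z = u then (1:ℝ) else 0))
              + (1 - α) * (P z y * τ z)) := by
            apply Finset.sum_congr rfl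
            intro z _
            simp only [hσdef]
            ring
        _ = α * P u y + (1 - α) * ∑ z : V, P z y * τ z := by
            rw [Finset.sum_add_distrib, ← Finset.mul_sum, ← Finset.mul_sum, hsum1]
    have hswap : ∑ z : V, P z y * τ z
        = ∑ x : V, P u x * ∑ z : V, P z y * π x z := by
      simp only [hτ, Finset.mul_sum]
      rw [Finset.sum_comm]
      apply Finset.sum_congr rfl
      intro x _
      apply Finset.sum_congr rfl
      intro z _
      ring
    have hkey : (1 - α) * ∑ x : V, P u x * ∑ z : V, P z y * π x z
        = τ y - α * P u y := by
      rw [Finset.mul_sum]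
      have hterm : ∀ x : V, (1 - α) * (P u x * ∑ z : V, P z y * π x z)
          = P u x * π x y - α * (P u x * (if y = x then (1:ℝ) else 0)) := by
        intro x
        linear_combination (-(P u x)) * (hπ' x y)
      rw [Finset.sum_congr rfl (fun x _ => hterm x), Finset.sum_sub_distrib]
      have : ∑ x : V, α * (P u x * (if y = x then (1:ℝ) else 0)) = α * P u y := by
        simp [mul_ite, Finset.sum_ite_eq]
      rw [this, hτ]
    rw [hsplit, hswap]
    simp only [hσdef]
    linear_combination (α - 1) * hkey
  -- the difference π u - σ satisfies the homogeneous equation, hence vanishes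
  have hπσ : ∀ y : V, π u y = σ y := by
    have hv : ∀ y : V, (π u y - σ y)
        = (1 - α) * ∑ z : V, P z y * (π u z - σ z) := by
      intro y
      have hsub : ∑ z : V, P z y * (π u z - σ z)
          = ∑ z : V, P z y * π u z - ∑ z : V, P z y * σ z := by
        rw [← Finset.sum_sub_distrib]
        apply Finset.sum_congr rfl
        intro z _
        ring
      rw [hsub]
      linear_combination (hπ' u y) - (hσ y)
    intro y
    have := ppr_fixed_zero α hα₀ hα₁ P hPnn hProw (fun y => π u y - σ y) hv y
    linarith
  -- main computation
  intro y
  have hterm : ∀ x : V, r' x * π x y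
      = (r x * π x y + (1 - α) * r u * (P u x * π x y))
        - (if x = u then r u * π u y else 0) := by
    intro x
    rw [hr' x]
    by_cases hx : x = u
    · subst hx
      simp [hPuu]
    · simp only [if_neg hx]
      rw [hP u x]
      ring
  have hsum : ∑ x : V, r' x * π x y
      = ∑ x : V, r x * π x y + (1 - α) * r u * τ y - r u * π u y := by
    rw [Finset.sum_congr rfl (fun x _ => hterm x), Finset.sum_sub_distrib,
      Finset.sum_add_distrib]
    have h1 : ∑ x : V, (1 - α) * r u * (P u x * π x y) = (1 - α) * r u * τ y := by
      rw [hτ, Finset.mul_sum]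
    have h2 : ∑ x : V, (if x = u then r u * π u y else 0) = r u * π u y := by
      simp [Finset.sum_ite_eq']
    rw [h1, h2]
  have hπu : π u y = α * (if y = u then (1:ℝ) else 0) + (1 - α) * τ y := hπσ y
  rw [hinv y, hp' y, hsum]
  by_cases hy : y = u
  · rw [hy] at hπu ⊢
    simp only [eq_self_iff_true, if_true] at hπu ⊢
    linear_combination r u * hπu
  · simp only [if_neg hy] at hπu ⊢
    linear_combination r u * hπu
end

section
/- (Push shrinks the residual) Let V be a nonempty finite node set with nonnegative weights w : V → V → ℝ and positive generalized out-degrees d(u) = Σ_v w(u,v) > 0, and let 0 < α < 1. Let u ∈ V satisfy w(u,u) = 0 and let r : V → ℝ be componentwise nonnegative. Define r' by r'(u) = 0 and r'(x) = r(x) + (1−α)·r(u)·w(u,x)/d(u) for x ≠ u. Then r' is componentwise nonnegative and ‖r'‖₁ = ‖r‖₁ − α·r(u). -/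
/-- **Push shrinks the residual.** Let `V` be a nonempty finite node set with
nonnegative weights `w` and positive generalized out-degrees `d(u) = Σ_v w(u,v) > 0`, and let
`0 < α < 1`. Let `u ∈ V` satisfy `w(u,u) = 0` and let `r : V → ℝ` be componentwise nonnegative.
Define `r'` by `r'(u) = 0` and `r'(x) = r(x) + (1-α)·r(u)·w(u,x)/d(u)` for `x ≠ u`. Then `r'` is
componentwise nonnegative and `‖r'‖₁ = ‖r‖₁ − α·r(u)`. -/
theorem push_shrinks_residual
    {V : Type*} [Fintype V] [Nonempty V] [DecidableEq V]
    (w : V → V → ℝ)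
    (hw_nonneg : ∀ u v : V, 0 ≤ w u v)
    (hd_pos : ∀ u : V, 0 < ∑ v : V, w u v)
    (α : ℝ) (hα₀ : 0 < α) (hα₁ : α < 1)
    (u : V) (hu : w u u = 0)
    (r : V → ℝ) (hr_nonneg : ∀ x : V, 0 ≤ r x)
    (r' : V → ℝ)
    (hr' : ∀ x : V,
      r' x = if x = u then 0 else r x + (1 - α) * r u * w u x / ∑ y : V, w u y) :
    (∀ x : V, 0 ≤ r' x) ∧
    (∑ x : V, |r' x|) = (∑ x : V, |r x|) - α * r u := by
  have hd := hd_pos u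
  have h1α : (0:ℝ) ≤ 1 - α := by linarith
  have hnonneg : ∀ x : V, 0 ≤ r' x := by
    intro x
    rw [hr' x]
    split
    · exact le_refl 0
    · have := hr_nonneg x
      have := hr_nonneg u
      have := hw_nonneg u x
      positivity
  refine ⟨hnonneg, ?_⟩
  have habs : ∀ x : V, |r' x| = r' x := fun x => abs_of_nonneg (hnonneg x)
  have habs' : ∀ x : V, |r x| = r x := fun x => abs_of_nonneg (hr_nonneg x)
  simp only [habs, habs']
  have key : ∑ x : V, r' x
      = ∑ x ∈ Finset.univ.erase u, (r x + (1 - α) * r u * w u x / ∑ y : V, w u y) := by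
    rw [← Finset.sum_erase_add _ _ (Finset.mem_univ u), hr' u, if_pos rfl, add_zero]
    exact Finset.sum_congr rfl fun x hx => by rw [hr' x, if_neg (Finset.ne_of_mem_erase hx)]
  rw [key, Finset.sum_add_distrib]
  have h2 : ∑ x ∈ Finset.univ.erase u, r x = (∑ x : V, r x) - r u :=
    Finset.sum_erase_eq_sub (Finset.mem_univ u)
  have h3 : ∑ x ∈ Finset.univ.erase u, (1 - α) * r u * w u x / ∑ y : V, w u y
      = (1 - α) * r u := by
    have hsum : ∑ x ∈ Finset.univ.erase u, w u x = ∑ y : V, w u y :=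
      Finset.sum_erase _ (by rw [hu])
    calc ∑ x ∈ Finset.univ.erase u, (1 - α) * r u * w u x / ∑ y : V, w u y
        = ((1 - α) * r u / ∑ y : V, w u y) * ∑ x ∈ Finset.univ.erase u, w u x := by
          rw [Finset.mul_sum]; exact Finset.sum_congr rfl fun x _ => by ring
      _ = (1 - α) * r u := by rw [hsum]; field_simp
  rw [h2, h3]; ring
end

section
/- (Pointwise approximation guarantee of forward push) Let V be a nonempty finite node set with nonnegative weights w : V → V → ℝ and positive generalized out-degrees d(u) = Σ_v w(u,v) > 0, let P(u,v) = w(u,v)/d(u), let 0 < α < 1, s ∈ V, and ε > 0. Suppose p, r : V → ℝ satisfy the invariant: for every u ∈ V, p(u) + α·r(u) = (1−α)·Σ_{x∈V} (w(x,u)/d(x))·p(x) + α·[u = s], and suppose |r(x)| ≤ ε·d(x) for every x ∈ V. Then for every u ∈ V, |π_s(u) − p(u)| ≤ ε·Σ_{x∈V} d(x)·π_x(u), where π_x is the personalized PageRank vector with source x. -/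
open Matrix

lemma fpush_contraction_zero {V : Type*} [Fintype V]
    (P : Matrix V V ℝ) (α : ℝ) (hα₀ : 0 < α) (hα₁ : α < 1)
    (hrow : ∀ u : V, ∑ v : V, P u v = 1)
    (g : V → ℝ) (hg0 : ∀ u, 0 ≤ g u)
    (hg : ∀ u, g u ≤ (1 - α) * ∑ x : V, P x u * g x) :
    ∀ u, g u = 0 := by
  have key : ∑ u : V, g u ≤ (1 - α) * ∑ u : V, g u := by
    calc ∑ u : V, g u ≤ ∑ u : V, (1 - α) * ∑ x : V, P x u * g x :=
          Finset.sum_le_sum fun u _ => hg u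
      _ = (1 - α) * ∑ u : V, ∑ x : V, P x u * g x := by rw [← Finset.mul_sum]
      _ = (1 - α) * ∑ x : V, ∑ u : V, P x u * g x := by rw [Finset.sum_comm]
      _ = (1 - α) * ∑ x : V, g x := by
          congr 1
          refine Finset.sum_congr rfl fun x _ => ?_
          rw [← Finset.sum_mul, hrow x, one_mul]
  have hsum0 : (0:ℝ) ≤ ∑ u : V, g u := Finset.sum_nonneg fun u _ => hg0 u
  have hz : ∑ u : V, g u = 0 := by nlinarith
  intro u
  exact (Finset.sum_eq_zero_iff_of_nonneg (fun x _ => hg0 x)).mp hz u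
    (Finset.mem_univ u)

/-- **Pointwise approximation guarantee of forward push.** Let `V` be a nonempty
finite node set with nonnegative weights `w` and positive generalized out-degrees
`d(u) = Σ_v w(u,v) > 0`, let `P(u,v) = w(u,v)/d(u)`, let `0 < α < 1`, `s ∈ V`, `ε > 0`, and let
`π_x` be the personalized PageRank vector of source `x`. Suppose `p, r : V → ℝ` satisfy the
invariant `p(u) + α·r(u) = (1-α)·Σ_x (w(x,u)/d(x))·p(x) + α·[u = s]` for all `u`, and suppose
`|r(x)| ≤ ε·d(x)` for every `x`. Then for every `u ∈ V`,
`|π_s(u) − p(u)| ≤ ε·Σ_x d(x)·π_x(u)`. -/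
theorem forward_push_pointwise_guarantee
    {V : Type*} [Fintype V] [Nonempty V] [DecidableEq V]
    (w : V → V → ℝ)
    (hw_nonneg : ∀ u v : V, 0 ≤ w u v)
    (hd_pos : ∀ u : V, 0 < ∑ v : V, w u v)
    (α : ℝ) (hα₀ : 0 < α) (hα₁ : α < 1) (s : V)
    (ε : ℝ) (hε : 0 < ε)
    (P : Matrix V V ℝ)
    (hP : ∀ u v : V, P u v = w u v / ∑ y : V, w u y)
    (π : V → V → ℝ)
    (hπ : ∀ x : V, π x = (1 - α) • Pᵀ.mulVec (π x) + α • (Pi.single x 1 : V → ℝ))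
    (p r : V → ℝ)
    (hinv : ∀ u : V, p u + α * r u =
      (1 - α) * (∑ x : V, (w x u / ∑ y : V, w x y) * p x) +
        α * (if u = s then 1 else 0))
    (hres : ∀ x : V, |r x| ≤ ε * ∑ y : V, w x y) :
    ∀ u : V, |π s u - p u| ≤ ε * ∑ x : V, (∑ y : V, w x y) * π x u := by
  have hP_nonneg : ∀ u v, 0 ≤ P u v := fun u v => by
    rw [hP]; exact div_nonneg (hw_nonneg u v) (hd_pos u).le
  have hrow : ∀ u : V, ∑ v : V, P u v = 1 := fun u => by
    simp only [hP]
    rw [← Finset.sum_div, div_self (hd_pos u).ne']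
  -- pointwise fixed-point equation for π
  have hπ' : ∀ x u : V, π x u =
      (1 - α) * ∑ v : V, P v u * π x v + α * (if u = x then 1 else 0) := by
    intro x u
    have := congrFun (hπ x) u
    simpa [Matrix.mulVec, dotProduct, Matrix.transpose_apply, Pi.single_apply,
      mul_comm] using this
  -- nonnegativity of π
  have hπ_nonneg : ∀ x u : V, 0 ≤ π x u := by
    intro x
    set g : V → ℝ := fun u => max (-(π x u)) 0 with hg_def
    have hg0 : ∀ u, 0 ≤ g u := fun u => le_max_right _ _
    have hg : ∀ u, g u ≤ (1 - α) * ∑ v : V, P v u * g v := by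
      intro u
      have hRHS : (0:ℝ) ≤ (1 - α) * ∑ v : V, P v u * g v := by
        apply mul_nonneg (by linarith)
        exact Finset.sum_nonneg fun v _ => mul_nonneg (hP_nonneg v u) (hg0 v)
      refine max_le ?_ hRHS
      have h1 : -(π x u) = (1 - α) * (∑ v : V, P v u * (-(π x v)))
          - α * (if u = x then 1 else 0) := by
        rw [hπ' x u]
        simp only [mul_neg, Finset.sum_neg_distrib]
        ring
      have h2 : ∑ v : V, P v u * (-(π x v)) ≤ ∑ v : V, P v u * g v :=
        Finset.sum_le_sum fun v _ =>
          mul_le_mul_of_nonneg_left (le_max_left _ _) (hP_nonneg v u)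
      have h3 : (0:ℝ) ≤ α * (if u = x then 1 else 0) := by positivity
      calc -(π x u) ≤ (1 - α) * (∑ v : V, P v u * (-(π x v))) := by rw [h1]; linarith
        _ ≤ (1 - α) * ∑ v : V, P v u * g v :=
            mul_le_mul_of_nonneg_left h2 (by linarith)
    have hz := fpush_contraction_zero P α hα₀ hα₁ hrow g hg0 hg
    intro u
    have h := hz u
    simp only [hg_def] at h
    have := max_eq_right_iff.mp h
    linarith
  -- rewrite the invariant with P
  have hinv' : ∀ u : V, p u = (1 - α) * ∑ x : V, P x u * p x
      + α * (if u = s then 1 else 0) - α * r u := by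
    intro u
    have h := hinv u
    simp only [← hP] at h
    linarith
  -- the error e and the combination q
  set e : V → ℝ := fun u => π s u - p u with he_def
  set q : V → ℝ := fun u => ∑ x : V, r x * π x u with hq_def
  -- e satisfies e = (1-α) Pᵀ e + α r
  have he : ∀ u : V, e u = (1 - α) * ∑ x : V, P x u * e x + α * r u := by
    intro u
    have h1 := hπ' s u
    have h2 := hinv' u
    have h3 : ∑ x : V, P x u * e x = (∑ x : V, P x u * π s x) - ∑ x : V, P x u * p x := by
      rw [← Finset.sum_sub_distrib]
      exact Finset.sum_congr rfl fun x _ => by simp [he_def]; ring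
    simp only [he_def]
    rw [h3]; rw [h1, h2]; ring
  -- q satisfies the same equation
  have hq : ∀ u : V, q u = (1 - α) * ∑ x : V, P x u * q x + α * r u := by
    intro u
    have h1 : q u = ∑ x : V, ((1 - α) * (r x * ∑ v : V, P v u * π x v)
        + α * (r x * (if u = x then 1 else 0))) := by
      simp only [hq_def]
      refine Finset.sum_congr rfl fun x _ => ?_
      rw [hπ' x u]; ring
    rw [h1, Finset.sum_add_distrib, ← Finset.mul_sum, ← Finset.mul_sum]
    have h2 : ∑ x : V, r x * (if u = x then 1 else 0) = r u := by
      simp [Finset.sum_ite_eq]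
    rw [h2]
    congr 2
    -- ∑ x, r x * ∑ v, P v u * π x v = ∑ v, P v u * q v
    calc ∑ x : V, r x * ∑ v : V, P v u * π x v
        = ∑ x : V, ∑ v : V, r x * (P v u * π x v) := by
          exact Finset.sum_congr rfl fun x _ => Finset.mul_sum _ _ _
      _ = ∑ v : V, ∑ x : V, r x * (P v u * π x v) := Finset.sum_comm
      _ = ∑ v : V, P v u * q v := by
          refine Finset.sum_congr rfl fun v _ => ?_
          simp only [hq_def, Finset.mul_sum]
          exact Finset.sum_congr rfl fun x _ => by ring
  -- h := e - q is a pure fixed point, hence zero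
  have heq : ∀ u : V, e u = q u := by
    set h : V → ℝ := fun u => |e u - q u| with hh_def
    have hh0 : ∀ u, 0 ≤ h u := fun u => abs_nonneg _
    have hh : ∀ u, h u ≤ (1 - α) * ∑ x : V, P x u * h x := by
      intro u
      have h1 : e u - q u = (1 - α) * ∑ x : V, P x u * (e x - q x) := by
        rw [he u, hq u]
        rw [show (∑ x : V, P x u * (e x - q x))
            = (∑ x : V, P x u * e x) - ∑ x : V, P x u * q x by
          rw [← Finset.sum_sub_distrib]
          exact Finset.sum_congr rfl fun x _ => by ring]
        ring
      simp only [hh_def]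
      rw [h1, abs_mul, abs_of_nonneg (by linarith : (0:ℝ) ≤ 1 - α)]
      apply mul_le_mul_of_nonneg_left _ (by linarith : (0:ℝ) ≤ 1 - α)
      calc |∑ x : V, P x u * (e x - q x)| ≤ ∑ x : V, |P x u * (e x - q x)| :=
            Finset.abs_sum_le_sum_abs _ _
        _ = ∑ x : V, P x u * |e x - q x| := by
            refine Finset.sum_congr rfl fun x _ => ?_
            rw [abs_mul, abs_of_nonneg (hP_nonneg x u)]
    intro u
    have := fpush_contraction_zero P α hα₀ hα₁ hrow h hh0 hh u
    simp only [hh_def, abs_eq_zero] at this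
    linarith
  -- conclude
  intro u
  rw [show π s u - p u = e u from rfl, heq u]
  calc |q u| ≤ ∑ x : V, |r x * π x u| := Finset.abs_sum_le_sum_abs _ _
    _ = ∑ x : V, |r x| * π x u := by
        refine Finset.sum_congr rfl fun x _ => ?_
        rw [abs_mul, abs_of_nonneg (hπ_nonneg x u)]
    _ ≤ ∑ x : V, (ε * ∑ y : V, w x y) * π x u :=
        Finset.sum_le_sum fun x _ =>
          mul_le_mul_of_nonneg_right (hres x) (hπ_nonneg x u)
    _ = ε * ∑ x : V, (∑ y : V, w x y) * π x u := by
        rw [Finset.mul_sum]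
        exact Finset.sum_congr rfl fun x _ => by ring
end

section
/- (ℓ1 approximation guarantee of forward push) Let V be a nonempty finite node set with nonnegative weights w : V → V → ℝ and positive generalized out-degrees d(u) = Σ_v w(u,v) > 0, let P(u,v) = w(u,v)/d(u), let 0 < α < 1 and s ∈ V. Suppose p, r : V → ℝ satisfy the invariant: for every u ∈ V, p(u) + α·r(u) = (1−α)·Σ_{x∈V} (w(x,u)/d(x))·p(x) + α·[u = s]. Then ‖π_s − p‖₁ ≤ ‖r‖₁. -/
open Matrix

/-- **ℓ1 approximation guarantee of forward push.** Let `V` be a nonempty finite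
node set with nonnegative weights `w` and positive generalized out-degrees
`d(u) = Σ_v w(u,v) > 0`, let `P(u,v) = w(u,v)/d(u)`, let `0 < α < 1` and `s ∈ V`, and let `π_x`
be the personalized PageRank vector of source `x`. Suppose `p, r : V → ℝ` satisfy the invariant
`p(u) + α·r(u) = (1-α)·Σ_x (w(x,u)/d(x))·p(x) + α·[u = s]` for all `u`. Then
`‖π_s − p‖₁ ≤ ‖r‖₁`. -/
theorem forward_push_l1_guarantee
    {V : Type*} [Fintype V] [Nonempty V] [DecidableEq V]
    (w : V → V → ℝ)
    (hw_nonneg : ∀ u v : V, 0 ≤ w u v)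
    (hd_pos : ∀ u : V, 0 < ∑ v : V, w u v)
    (α : ℝ) (hα₀ : 0 < α) (hα₁ : α < 1) (s : V)
    (P : Matrix V V ℝ)
    (hP : ∀ u v : V, P u v = w u v / ∑ y : V, w u y)
    (π : V → V → ℝ)
    (hπ : ∀ x : V, π x = (1 - α) • Pᵀ.mulVec (π x) + α • (Pi.single x 1 : V → ℝ))
    (p r : V → ℝ)
    (hinv : ∀ u : V, p u + α * r u =
      (1 - α) * (∑ x : V, (w x u / ∑ y : V, w x y) * p x) +
        α * (if u = s then 1 else 0)) :
    ∑ u : V, |π s u - p u| ≤ ∑ u : V, |r u| := by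
  set e : V → ℝ := fun u => π s u - p u with he
  have hPsum : ∀ x : V, ∑ u : V, P x u = 1 := by
    intro x
    simp only [hP]
    rw [← Finset.sum_div]
    exact div_self (hd_pos x).ne'
  have hPnn : ∀ x u : V, 0 ≤ P x u := fun x u => by
    rw [hP]; exact div_nonneg (hw_nonneg x u) (hd_pos x).le
  have he_eq : ∀ u : V, e u = (1 - α) * (∑ x : V, P x u * e x) + α * r u := by
    intro u
    have h1 := congrFun (hπ s) u
    simp only [Pi.add_apply, Pi.smul_apply, smul_eq_mul, Pi.single_apply,
      Matrix.mulVec, Matrix.transpose_apply, dotProduct] at h1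
    have h2 := hinv u
    simp only [← hP] at h2
    have : e u = ((1 - α) * ∑ x : V, P x u * π s x + α * (if u = s then 1 else 0))
        - ((1 - α) * (∑ x : V, P x u * p x) + α * (if u = s then 1 else 0) - α * r u) := by
      rw [← h1]
      have : (1 - α) * (∑ x : V, P x u * p x) + α * (if u = s then 1 else 0) - α * r u = p u := by
        rw [← h2]; ring
      rw [this]
    rw [this]
    have hsum : ∑ x : V, P x u * e x = (∑ x : V, P x u * π s x) - ∑ x : V, P x u * p x := by
      rw [← Finset.sum_sub_distrib]
      exact Finset.sum_congr rfl fun x _ => by simp [he, mul_sub]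
    rw [hsum]; ring
  have key : ∑ u : V, |e u| ≤ (1 - α) * (∑ u : V, |e u|) + α * ∑ u : V, |r u| := by
    have step : ∀ u : V, |e u| ≤ (1 - α) * (∑ x : V, P x u * |e x|) + α * |r u| := by
      intro u
      rw [he_eq u]
      refine (abs_add_le _ _).trans ?_
      rw [abs_mul, abs_mul, abs_of_nonneg (by linarith), abs_of_nonneg hα₀.le]
      refine add_le_add (mul_le_mul_of_nonneg_left ?_ (by linarith)) le_rfl
      refine (Finset.abs_sum_le_sum_abs _ _).trans ?_
      refine Finset.sum_le_sum fun x _ => ?_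
      rw [abs_mul, abs_of_nonneg (hPnn x u)]
    calc ∑ u : V, |e u| ≤ ∑ u : V, ((1 - α) * (∑ x : V, P x u * |e x|) + α * |r u|) :=
          Finset.sum_le_sum fun u _ => step u
      _ = (1 - α) * (∑ u : V, ∑ x : V, P x u * |e x|) + α * ∑ u : V, |r u| := by
          rw [Finset.sum_add_distrib, ← Finset.mul_sum, ← Finset.mul_sum]
      _ = (1 - α) * (∑ u : V, |e u|) + α * ∑ u : V, |r u| := by
          congr 1
          rw [Finset.sum_comm]
          congr 1
          refine Finset.sum_congr rfl fun x _ => ?_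
          rw [← Finset.sum_mul, hPsum x, one_mul]
  have : α * ∑ u : V, |e u| ≤ α * ∑ u : V, |r u| := by linarith
  have := le_of_mul_le_mul_left this hα₀
  simpa [he] using this
end

section
/- (Generalized PPR update rules restore the invariant after a weighted edge event) Let V be a nonempty finite node set with nonnegative weights w : V → V → ℝ and positive generalized out-degrees d(x) = Σ_y w(x,y) > 0, let 0 < α < 1, let s ∈ V, and let u, v ∈ V with u ≠ v. Let Δ ∈ ℝ be an edge event on (u,v) satisfying w(u,v) + Δ ≥ 0 and d(u) + Δ > 0, and define updated weights w' by w'(x,y) = w(x,y) except w'(u,v) = w(u,v) + Δ, with updated degrees d'(x) = d(x) for x ≠ u and d'(u) = d(u) + Δ. Suppose p, r : V → ℝ satisfy the invariant for the old weights: for every i ∈ V, p(i) + α·r(i) = (1−α)·Σ_{x∈V} (w(x,i)/d(x))·p(x) + α·[i = s]. Define p' by p'(x) = p(x) for x ≠ u and p'(u) = p(u)·(d(u)+Δ)/d(u), and define r' by r'(x) = r(x) for x ∉ {u,v}, r'(u) = r(u) − Δ·p(u)/(α·d(u)), and r'(v) = r(v) + ((1−α)/α)·Δ·p(u)/d(u).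 Then the invariant holds for the new weights: for every i ∈ V, p'(i) + α·r'(i) = (1−α)·Σ_{x∈V} (w'(x,i)/d'(x))·p'(x) + α·[i = s]. -/
/-! Only the out-edges of `u` change, and the rule for `p'(u)` keeps the ratio `p(u)/d(u)` fixed, so
in the transition sum `Σ_x (w(x,i)/d(x)) p(x)` only the term `x = u` moves, by
`(w'(u,i) - w(u,i)) · p(u)/d(u)`, i.e. by `Δ · p(u)/d(u)` at `i = v` and not at all elsewhere.
The residual corrections are chosen to absorb exactly this: at `u` the growth `Δ · p(u)/d(u)` of
`p` is cancelled by `α · (r'(u) - r(u))`, and at `v` the term `α · (r'(v) - r(v))` supplies the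
factor `(1 - α)` in front of the changed sum. -/

section

variable {V : Type*} [Fintype V]

theorem Fintype.sum_eq_sum_add_sub_of_eq_of_ne {M : Type*} [AddCommGroup M] {f g : V → M}
    (u : V) (h : ∀ x, x ≠ u → f x = g x) :
    ∑ x, f x = ∑ x, g x + (f u - g u) := by
  rw [← sub_eq_iff_eq_add', ← Finset.sum_sub_distrib]
  exact Finset.sum_eq_single_of_mem u (Finset.mem_univ u)
    fun x _ hx => sub_eq_zero.mpr (h x hx)

theorem sum_div_mul_eq_add_of_eq_of_ne {K : Type*} [Field K] {w w' : V → V → K}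
    {d d' p p' : V → K} (u : V)
    (hw : ∀ x, x ≠ u → ∀ i, w' x i = w x i) (hd : ∀ x, x ≠ u → d' x = d x)
    (hp : ∀ x, x ≠ u → p' x = p x) (hu : p' u / d' u = p u / d u) (i : V) :
    ∑ x, w' x i / d' x * p' x = ∑ x, w x i / d x * p x + (w' u i - w u i) * (p u / d u) := by
  rw [Fintype.sum_eq_sum_add_sub_of_eq_of_ne u fun x hx => by rw [hw x hx, hd x hx, hp x hx]]
  congr 1
  calc w' u i / d' u * p' u - w u i / d u * p u
      = w' u i * (p' u / d' u) - w u i * (p u / d u) := by ring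
    _ = (w' u i - w u i) * (p u / d u) := by rw [hu]; ring

end

theorem generalized_ppr_update_rules_general
    {V : Type*} [Fintype V] [DecidableEq V]
    (w : V → V → ℝ)
    (hd_pos : ∀ x : V, 0 < ∑ y : V, w x y)
    (α : ℝ) (hα₀ : 0 < α) (s : V)
    (u v : V) (huv : u ≠ v)
    (Δ : ℝ) (hΔd : 0 < (∑ y : V, w u y) + Δ)
    (w' : V → V → ℝ)
    (hw' : ∀ x y : V, w' x y = if x = u ∧ y = v then w u v + Δ else w x y)
    (d' : V → ℝ)
    (hd' : ∀ x : V, d' x = if x = u then (∑ y : V, w u y) + Δ else ∑ y : V, w x y)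
    (p r : V → ℝ)
    (hinv : ∀ i : V, p i + α * r i =
      (1 - α) * (∑ x : V, (w x i / ∑ y : V, w x y) * p x) +
        α * (if i = s then 1 else 0))
    (p' : V → ℝ)
    (hp' : ∀ x : V, p' x =
      if x = u then p u * ((∑ y : V, w u y) + Δ) / (∑ y : V, w u y) else p x)
    (r' : V → ℝ)
    (hr' : ∀ x : V, r' x =
      if x = u then r u - Δ * p u / (α * ∑ y : V, w u y)
      else if x = v then r v + ((1 - α) / α) * (Δ * p u / ∑ y : V, w u y)
      else r x) :
    ∀ i : V, p' i + α * r' i =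
      (1 - α) * (∑ x : V, (w' x i / d' x) * p' x) +
        α * (if i = s then 1 else 0) := by
  intro i
  have hdu : (∑ y : V, w u y) ≠ 0 := (hd_pos u).ne'
  have hpu : p' u / d' u = p u / ∑ y : V, w u y := by
    rw [hp', hd', if_pos rfl, if_pos rfl]
    field_simp [hΔd.ne']
  have hwu : w' u i - w u i = if i = v then Δ else 0 := by
    rw [hw']
    split_ifs <;> simp_all
  have hsum := sum_div_mul_eq_add_of_eq_of_ne (w := w) (w' := w') (d := fun x => ∑ y, w x y) u
    (fun x hx y => by rw [hw', if_neg (fun h => hx h.1)])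
    (fun x hx => by rw [hd', if_neg hx]) (fun x hx => by rw [hp', if_neg hx]) hpu i
  rw [hsum, hwu, mul_add, add_right_comm, ← hinv i, hp' i, hr' i]
  rcases eq_or_ne i u with rfl | hiu
  · simp only [↓reduceIte, if_neg huv]
    field_simp
    ring
  · rcases eq_or_ne i v with rfl | hiv
    · simp only [↓reduceIte, if_neg hiu]
      field_simp
      ring
    · simp only [if_neg hiu, if_neg hiv]
      ring

/-- **Generalized PPR update rules restore the invariant after a weighted edge
event.** Let `V` be a nonempty finite node set with nonnegative weights `w` and positive
generalized out-degrees `d(x) = Σ_y w(x,y) > 0`, let `0 < α < 1`, `s ∈ V`, and `u ≠ v` in `V`.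
Let `Δ` be an edge event on `(u,v)` with `w(u,v) + Δ ≥ 0` and `d(u) + Δ > 0`, and let `w'` be
the updated weights (`w'(u,v) = w(u,v) + Δ`, unchanged elsewhere) with updated degrees `d'`
(`d'(u) = d(u) + Δ`, `d'(x) = d(x)` otherwise). Suppose `p, r` satisfy the invariant for the
old weights. Define `p'(u) = p(u)·(d(u)+Δ)/d(u)`, `r'(u) = r(u) − Δ·p(u)/(α·d(u))`,
`r'(v) = r(v) + ((1−α)/α)·Δ·p(u)/d(u)`, leaving all other entries unchanged. Then the invariant
holds for the new weights. -/
theorem generalized_ppr_update_rules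
    {V : Type*} [Fintype V] [Nonempty V] [DecidableEq V]
    (w : V → V → ℝ)
    (hw_nonneg : ∀ x y : V, 0 ≤ w x y)
    (hd_pos : ∀ x : V, 0 < ∑ y : V, w x y)
    (α : ℝ) (hα₀ : 0 < α) (hα₁ : α < 1) (s : V)
    (u v : V) (huv : u ≠ v)
    (Δ : ℝ) (hΔw : 0 ≤ w u v + Δ) (hΔd : 0 < (∑ y : V, w u y) + Δ)
    (w' : V → V → ℝ)
    (hw' : ∀ x y : V, w' x y = if x = u ∧ y = v then w u v + Δ else w x y)
    (d' : V → ℝ)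
    (hd' : ∀ x : V, d' x = if x = u then (∑ y : V, w u y) + Δ else ∑ y : V, w x y)
    (p r : V → ℝ)
    (hinv : ∀ i : V, p i + α * r i =
      (1 - α) * (∑ x : V, (w x i / ∑ y : V, w x y) * p x) +
        α * (if i = s then 1 else 0))
    (p' : V → ℝ)
    (hp' : ∀ x : V, p' x =
      if x = u then p u * ((∑ y : V, w u y) + Δ) / (∑ y : V, w u y) else p x)
    (r' : V → ℝ)
    (hr' : ∀ x : V, r' x =
      if x = u then r u - Δ * p u / (α * ∑ y : V, w u y)
      else if x = v then r v + ((1 - α) / α) * (Δ * p u / ∑ y : V, w u y)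
      else r x) :
    ∀ i : V, p' i + α * r' i =
      (1 - α) * (∑ x : V, (w' x i / d' x) * p' x) +
        α * (if i = s then 1 else 0) :=
  generalized_ppr_update_rules_general w hd_pos α hα₀ s u v huv Δ hΔd w' hw' d' hd' p r hinv p' hp'
    r' hr'
end

section
/- (Equivalence of lazy and non-lazy personalized PageRank) Let V be a nonempty finite node set, Q a row-stochastic matrix on V, 0 ≤ β < 1, and set P = (1−β)·Q + β·I (the lazy random-walk transition matrix, which is also row-stochastic). Let 0 < α < 1, s ∈ V, and define α' = α / (1 − (1−α)·β). Then 0 < α ≤ α' < 1, and a vector π : V → ℝ satisfies π = (1−α)·Pᵀ·π + α·1_s if and only if it satisfies π = (1−α')·Qᵀ·π + α'·1_s; consequently the lazy PPV with teleport probability α equals the non-lazy PPV with teleport probability α'. -/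
open Matrix

/-- **Equivalence of lazy and non-lazy personalized PageRank.** Let `V` be a
nonempty finite node set, `Q` a row-stochastic matrix on `V`, `0 ≤ β < 1`, and set
`P = (1−β)·Q + β·I` (the lazy random-walk transition matrix). Let `0 < α < 1`, `s ∈ V`, and
define `α' = α / (1 − (1−α)·β)`. Then `0 < α ≤ α' < 1`, and a vector `π : V → ℝ` satisfies
`π = (1−α)·Pᵀ·π + α·1_s` if and only if it satisfies `π = (1−α')·Qᵀ·π + α'·1_s`; hence the lazy
PPV with teleport probability `α` equals the non-lazy PPV with teleport probability `α'`. -/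
theorem lazy_nonlazy_ppr_equivalence
    {V : Type*} [Fintype V] [Nonempty V] [DecidableEq V]
    (Q : Matrix V V ℝ)
    (hQ_nonneg : ∀ u v : V, 0 ≤ Q u v)
    (hQ_rowsum : ∀ u : V, ∑ v : V, Q u v = 1)
    (β : ℝ) (hβ₀ : 0 ≤ β) (hβ₁ : β < 1)
    (P : Matrix V V ℝ) (hPdef : P = (1 - β) • Q + β • (1 : Matrix V V ℝ))
    (α : ℝ) (hα₀ : 0 < α) (hα₁ : α < 1) (s : V)
    (α' : ℝ) (hα'def : α' = α / (1 - (1 - α) * β)) :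
    (0 < α ∧ α ≤ α' ∧ α' < 1) ∧
    ∀ π : V → ℝ,
      (π = (1 - α) • Pᵀ.mulVec π + α • (Pi.single s 1 : V → ℝ) ↔
        π = (1 - α') • Qᵀ.mulVec π + α' • (Pi.single s 1 : V → ℝ)) := by
  have hd : 0 < 1 - (1 - α) * β := by nlinarith
  have hd_ne : (1 - (1 - α) * β) ≠ 0 := ne_of_gt hd
  have h1 : (1 - (1 - α) * β) * α' = α := by rw [hα'def]; field_simp
  have h2 : (1 - (1 - α) * β) * (1 - α') = (1 - α) * (1 - β) := by
    rw [mul_sub, mul_one, h1]; ring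
  refine ⟨⟨hα₀, ?_, ?_⟩, ?_⟩
  · rw [hα'def, le_div_iff₀ hd]; nlinarith [mul_nonneg (mul_nonneg hα₀.le (by linarith : (0:ℝ) ≤ 1 - α)) hβ₀]
  · rw [hα'def, div_lt_one hd]; nlinarith
  · intro π
    have hq : Pᵀ.mulVec π = (1 - β) • Qᵀ.mulVec π + β • π := by
      rw [hPdef]
      simp [transpose_add, transpose_smul, add_mulVec, smul_mulVec, one_mulVec]
    rw [hq]
    constructor <;> intro h <;> funext v <;> have hv := congrFun h v <;>
      simp only [Pi.add_apply, Pi.smul_apply, smul_eq_mul] at hv ⊢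
    · have : (1 - (1 - α) * β) * π v =
          (1 - (1 - α) * β) * ((1 - α') * Qᵀ.mulVec π v + α' * (Pi.single s 1 : V → ℝ) v) := by
        rw [mul_add, ← mul_assoc, ← mul_assoc, h2, h1]
        linear_combination hv
      exact mul_left_cancel₀ hd_ne this
    · have : (1 - (1 - α) * β) * π v =
          (1 - (1 - α) * β) * ((1 - α) * ((1 - β) * Qᵀ.mulVec π v + β * π v) + α * (Pi.single s 1 : V → ℝ) v) := by
        linear_combination ((1 - (1 - α) * β)^2) * hv
          + ((1 - (1 - α) * β) * Qᵀ.mulVec π v) * h2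
          + ((1 - (1 - α) * β) * (Pi.single s 1 : V → ℝ) v) * h1
      exact mul_left_cancel₀ hd_ne this
end
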